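/- arXiv:1905.07674 — 3 statements merged into one kernel-verified Lean document; each statement's English description precedes it below -/
import Mathlib

section
/- Let Ω be a (possibly noncommutative) ring, R a commutative subring contained in the center of Ω, and d : R → Ω an additive map with d(a·b) = d(a)·b + a·d(b). Let I be a type and g : I → I → Matrix(n, n, R) satisfy the cocycle conditions g(a,b)·g(b,c) = g(a,c) and g(a,a) = 1 for all a, b, c. Define, for p ≥ 1 and indices i₀, …, i_p in I, c(i₀,…,i_p) := trace( g(i₀,i_p) · D(g(i_p,i_{p-1})) · D(g(i_{p-1},i_{p-2})) · ⋯ · D(g(i₁,i₀)) ) ∈ Ω, where D applies d entrywise and matrices over R are viewed as matrices over Ω. Then for all p ≥ 1 and all indices i₀, …, i_{p+1}: Σ_{j=0}^{p+1} (−1)^j · c(i₀, …, î_j, …, i_{p+1}) = 0 (the hat denotes omission of the index i_j). -/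
/-- The O'Brian–Toledo–Tong Chern character cochain:
`c(i₀,…,i_p) = tr( g(i₀,i_p) · D(g(i_p,i_{p−1})) ⋯ D(g(i₁,i₀)) )`,
where `D` applies `d : S → Ω` entrywise and matrices over the central subring `S`
are viewed over `Ω` via coercion.  The indices `i₀,…,i_p` are encoded as the first
`p+1` values of `i : ℕ → I`. -/
noncomputable def chernCochain {Ω : Type*} [Ring Ω] (S : Subring Ω) (d : S → Ω)
    {n : ℕ} {I : Type*} (g : I → I → Matrix (Fin n) (Fin n) S)
    (i : ℕ → I) (p : ℕ) : Ω :=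
  Matrix.trace
    (((g (i 0) (i p)).map (fun x => (x : Ω))) *
      ((List.range p).reverse.map (fun t => (g (i (t + 1)) (i t)).map d)).prod)

/-! Write `Z_j` (`0 ≤ j ≤ p`) for the trace of `g(i₀,i_{p+1})` times the product of the factors
`D g(i_{t+1}, i_t)`, `t = p, …, 0`, in which the `j`-th factor is replaced by `g(i_{j+1}, i_j)`
itself (`mixedTerm`). The `j`-th face of the cochain is `Z_{j-1} + Z_j`: for `0 < j ≤ p` this is
Leibniz's rule applied to `g(i_{j+1}, i_{j-1}) = g(i_{j+1}, i_j) g(i_j, i_{j-1})`; for `j = p + 1`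
the cocycle law absorbs `g(i_{p+1}, i_p)` into `g(i₀, i_{p+1})`; and for `j = 0` the same happens
after cycling `g(i₁, i₀)` around the trace, which is allowed because its entries are central.
The alternating sum of the faces then telescopes. -/

open Finset

theorem Matrix.trace_mul_comm_of_commute {m o R : Type*} [Fintype m] [Fintype o]
    [AddCommMonoid R] [Mul R] (A : Matrix m o R) (B : Matrix o m R)
    (h : ∀ j k, Commute (A j k) (B k j)) :
    (A * B).trace = (B * A).trace := by
  simp only [Matrix.trace, Matrix.diag, Matrix.mul_apply]
  rw [sum_comm]
  exact sum_congr rfl fun k _ => sum_congr rfl fun j _ => (h j k).eq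

theorem Matrix.map_mul_of_leibniz {m o q R Ω : Type*} [Fintype o] [Ring R] [Ring Ω]
    (φ : R →+* Ω) (d : R → Ω) (hadd : ∀ a b, d (a + b) = d a + d b)
    (hmul : ∀ a b, d (a * b) = d a * φ b + φ a * d b) (A : Matrix m o R) (B : Matrix o q R) :
    (A * B).map d = A.map d * B.map φ + A.map φ * B.map d := by
  ext j k
  simp only [Matrix.map_apply, Matrix.mul_apply, Matrix.add_apply, ← sum_add_distrib, ← hmul]
  exact map_sum (AddMonoidHom.mk' d hadd) _ _

theorem sum_range_neg_one_pow_mul_add_succ {R : Type*} [Ring R] (W : ℕ → R) (N : ℕ) :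
    ∑ j ∈ range N, (-1) ^ j * (W j + W (j + 1)) = W 0 - (-1) ^ N * W N := by
  induction N with
  | zero => simp
  | succ N ih => rw [sum_range_succ, ih, pow_succ]; noncomm_ring

section revProd

variable {M : Type*} [Monoid M]

def revProd (f : ℕ → M) (p : ℕ) : M :=
  ((List.range p).reverse.map f).prod

@[simp]
theorem revProd_zero (f : ℕ → M) : revProd f 0 = 1 := rfl

theorem revProd_succ (f : ℕ → M) (p : ℕ) : revProd f (p + 1) = f p * revProd f p := by
  simp [revProd, List.range_succ]

theorem revProd_succ' (f : ℕ → M) (p : ℕ) :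
    revProd f (p + 1) = revProd (fun t => f (t + 1)) p * f 0 := by
  induction p with
  | zero => simp [revProd_succ]
  | succ p ih => rw [revProd_succ, ih, revProd_succ, mul_assoc]

theorem revProd_add_one_add (f : ℕ → M) (a c : ℕ) :
    revProd f (a + 1 + c) = revProd (fun t => f (a + 1 + t)) c * f a * revProd f a := by
  induction c with
  | zero => simp [revProd_succ]
  | succ c ih => rw [← add_assoc, revProd_succ, ih, revProd_succ, mul_assoc, mul_assoc, mul_assoc]

theorem revProd_congr {f f' : ℕ → M} {p : ℕ} (h : ∀ t < p, f t = f' t) :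
    revProd f p = revProd f' p := by
  induction p with
  | zero => rfl
  | succ p ih => rw [revProd_succ, revProd_succ, h p p.lt_add_one, ih fun t ht => h t (by omega)]

end revProd

section chern

variable {Ω : Type*} [Ring Ω] {S : Subring Ω} (d : S → Ω) {n : ℕ} {I : Type*}
  (g : I → I → Matrix (Fin n) (Fin n) S) (i : ℕ → I)

theorem chernCochain_eq_trace_revProd (p : ℕ) :
    chernCochain S d g i p =
      ((g (i 0) (i p)).map ((↑) : S → Ω) * revProd (fun t => (g (i (t + 1)) (i t)).map d) p).trace :=
  rfl

theorem chernCochain_congr {i i' : ℕ → I} {p : ℕ} (h : ∀ t ≤ p, i t = i' t) :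
    chernCochain S d g i p = chernCochain S d g i' p := by
  rw [chernCochain_eq_trace_revProd, chernCochain_eq_trace_revProd, h 0 p.zero_le, h p le_rfl,
    revProd_congr fun t ht => by rw [h t ht.le, h (t + 1) ht]]

noncomputable def mixedFactor (j t : ℕ) : Matrix (Fin n) (Fin n) Ω :=
  if t = j then (g (i (t + 1)) (i t)).map ((↑) : S → Ω) else (g (i (t + 1)) (i t)).map d

noncomputable def mixedTerm (p j : ℕ) : Ω :=
  ((g (i 0) (i (p + 1))).map ((↑) : S → Ω) * revProd (mixedFactor d g i j) (p + 1)).trace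

theorem trace_mul_map_coe_comm (hcen : ∀ (s : S) (x : Ω), (s : Ω) * x = x * (s : Ω))
    (A : Matrix (Fin n) (Fin n) Ω) (B : Matrix (Fin n) (Fin n) S) :
    (A * B.map ((↑) : S → Ω)).trace = (B.map ((↑) : S → Ω) * A).trace :=
  Matrix.trace_mul_comm_of_commute _ _ fun _ _ => (hcen _ _).symm

theorem mixedFactor_self (j : ℕ) :
    mixedFactor d g i j j = (g (i (j + 1)) (i j)).map ((↑) : S → Ω) :=
  if_pos rfl

theorem mixedFactor_of_ne {j t : ℕ} (h : t ≠ j) :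
    mixedFactor d g i j t = (g (i (t + 1)) (i t)).map d :=
  if_neg h

theorem revProd_mixedFactor_of_le {j p : ℕ} (h : p ≤ j) :
    revProd (mixedFactor d g i j) p = revProd (fun t => (g (i (t + 1)) (i t)).map d) p :=
  revProd_congr fun _ ht => mixedFactor_of_ne d g i (by omega)

variable {g}

theorem map_coe_mul_of_cocycle (hcoc : ∀ a b c : I, g a b * g b c = g a c) (a b c : I) :
    (g a b).map ((↑) : S → Ω) * (g b c).map (↑) = (g a c).map (↑) := by
  rw [← hcoc a b c]
  exact (Matrix.map_mul (f := S.subtype)).symm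

theorem mixedTerm_self (hcoc : ∀ a b c : I, g a b * g b c = g a c) (p : ℕ) :
    mixedTerm d g i p p = chernCochain S d g i p := by
  rw [mixedTerm, revProd_succ, mixedFactor_self, ← mul_assoc,
    map_coe_mul_of_cocycle hcoc, chernCochain_eq_trace_revProd,
    revProd_mixedFactor_of_le d g i le_rfl]

theorem mixedTerm_zero (hcen : ∀ (s : S) (x : Ω), (s : Ω) * x = x * (s : Ω))
    (hcoc : ∀ a b c : I, g a b * g b c = g a c) (p : ℕ) :
    mixedTerm d g i p 0 = chernCochain S d g (fun t => i (t + 1)) p := by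
  rw [mixedTerm, revProd_succ', mixedFactor_self, ← mul_assoc, trace_mul_map_coe_comm hcen,
    ← mul_assoc, map_coe_mul_of_cocycle hcoc, chernCochain_eq_trace_revProd,
    revProd_congr fun t _ => mixedFactor_of_ne d g i t.succ_ne_zero]

theorem mixedTerm_add_mixedTerm_succ (hd_add : ∀ a b : S, d (a + b) = d a + d b)
    (hd_mul : ∀ a b : S, d (a * b) = d a * (b : Ω) + (a : Ω) * d b)
    (hcoc : ∀ a b c : I, g a b * g b c = g a c) (m q : ℕ) :
    mixedTerm d g i (m + 1 + q) m + mixedTerm d g i (m + 1 + q) (m + 1) =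
      chernCochain S d g (fun t => if t < m + 1 then i t else i (t + 1)) (m + 1 + q) := by
  set E : ℕ → Matrix (Fin n) (Fin n) Ω := fun t => (g (i (t + 1)) (i t)).map d
  set G : ℕ → Matrix (Fin n) (Fin n) Ω := fun t => (g (i (t + 1)) (i t)).map (↑)
  set U := revProd (fun t => E (m + 1 + 1 + t)) q
  set L := revProd E m
  set k : ℕ → I := fun t => if t < m + 1 then i t else i (t + 1)
  have hleibniz : (g (i (m + 1 + 1)) (i m)).map d = E (m + 1) * G m + G (m + 1) * E m := by
    rw [← hcoc _ (i (m + 1)), Matrix.map_mul_of_leibniz S.subtype d hd_add hd_mul]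
    rfl
  have hm : revProd (mixedFactor d g i m) (m + 1 + q + 1) = U * E (m + 1) * (G m * L) := by
    rw [show m + 1 + q + 1 = m + 1 + 1 + q by omega, revProd_add_one_add, revProd_succ,
      mixedFactor_of_ne d g i (by omega), mixedFactor_self, revProd_mixedFactor_of_le d g i le_rfl,
      revProd_congr fun t _ => mixedFactor_of_ne d g i (by omega : m + 1 + 1 + t ≠ m)]
  have hm1 : revProd (mixedFactor d g i (m + 1)) (m + 1 + q + 1) = U * G (m + 1) * (E m * L) := by
    rw [show m + 1 + q + 1 = m + 1 + 1 + q by omega, revProd_add_one_add, revProd_succ,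
      mixedFactor_of_ne d g i (by omega : m ≠ m + 1), mixedFactor_self,
      revProd_mixedFactor_of_le d g i m.le_succ,
      revProd_congr fun t _ => mixedFactor_of_ne d g i (by omega : m + 1 + 1 + t ≠ m + 1)]
  have hk_le : ∀ t ≤ m, k t = i t := fun t ht => if_pos (by omega)
  have hk_gt : ∀ t, m < t → k t = i (t + 1) := fun t ht => if_neg (by omega)
  have hface : revProd (fun t => (g (k (t + 1)) (k t)).map d) (m + 1 + q) =
      U * (g (i (m + 1 + 1)) (i m)).map d * L := by
    rw [revProd_add_one_add, hk_gt (m + 1) m.lt_succ_self, hk_le m le_rfl,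
      revProd_congr fun t (ht : t < m) => by rw [hk_le t ht.le, hk_le (t + 1) ht]]
    congr 2
    refine revProd_congr fun t _ => ?_
    rw [hk_gt _ (by omega), hk_gt _ (by omega), show m + 1 + t + 1 = m + 1 + 1 + t by omega]
  rw [chernCochain_eq_trace_revProd, hface, hleibniz, mixedTerm, mixedTerm, hm, hm1,
    ← Matrix.trace_add, ← mul_add, hk_le 0 m.zero_le, hk_gt _ (by omega)]
  congr 2
  noncomm_ring

end chern

theorem chernCochain_cocycle_general {Ω : Type*} [Ring Ω] (S : Subring Ω)
    (hcen : ∀ (s : S) (x : Ω), (s : Ω) * x = x * (s : Ω))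
    (d : S → Ω)
    (hd_add : ∀ a b : S, d (a + b) = d a + d b)
    (hd_mul : ∀ a b : S, d (a * b) = d a * (b : Ω) + (a : Ω) * d b)
    {n : ℕ} {I : Type*} (g : I → I → Matrix (Fin n) (Fin n) S)
    (hcoc : ∀ a b c : I, g a b * g b c = g a c)
    (p : ℕ) (i : ℕ → I) :
    ∑ j ∈ Finset.range (p + 2),
        (-1 : Ω) ^ j *
          chernCochain S d g (fun t => if t < j then i t else i (t + 1)) p = 0 := by
  -- `W (j + 1) = Z_j`, padded by zeros so that the `j`-th face is `W j + W (j + 1)` for all `j`.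
  set W : ℕ → Ω := fun k => if k = 0 ∨ k = p + 2 then 0 else mixedTerm d g i p (k - 1)
  have hface : ∀ j < p + 2,
      chernCochain S d g (fun t => if t < j then i t else i (t + 1)) p = W j + W (j + 1) := by
    rintro (_ | m) hm
    · simp [W, mixedTerm_zero d i hcen hcoc]
    obtain hmp | rfl : m < p ∨ m = p := by omega
    · obtain ⟨q, rfl⟩ : ∃ q, p = m + 1 + q := ⟨p - (m + 1), by omega⟩
      rw [← mixedTerm_add_mixedTerm_succ d i hd_add hd_mul hcoc]
      simp only [W]
      rw [if_neg (by omega), if_neg (by omega), Nat.add_sub_cancel, Nat.add_sub_cancel]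
    · rw [chernCochain_congr d g fun t ht => if_pos (Nat.lt_succ_of_le ht),
        ← mixedTerm_self d i hcoc]
      simp [W]
  rw [sum_congr rfl fun j hj => by rw [hface j (mem_range.mp hj)],
    sum_range_neg_one_pow_mul_add_succ]
  simp [W]

/-- The Chern character cochains form a Čech cocycle: for `p ≥ 1` and any indices
`i₀,…,i_{p+1}`, the alternating sum of the cochains on the index sequences with one
index omitted vanishes. -/
theorem chernCochain_cocycle {Ω : Type*} [Ring Ω] (S : Subring Ω)
    (hcen : ∀ (s : S) (x : Ω), (s : Ω) * x = x * (s : Ω))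
    (d : S → Ω)
    (hd_add : ∀ a b : S, d (a + b) = d a + d b)
    (hd_mul : ∀ a b : S, d (a * b) = d a * (b : Ω) + (a : Ω) * d b)
    {n : ℕ} {I : Type*} (g : I → I → Matrix (Fin n) (Fin n) S)
    (hcoc : ∀ a b c : I, g a b * g b c = g a c)
    (hone : ∀ a : I, g a a = 1)
    (p : ℕ) (hp : 1 ≤ p) (i : ℕ → I) :
    ∑ j ∈ Finset.range (p + 2),
        (-1 : Ω) ^ j *
          chernCochain S d g (fun t => if t < j then i t else i (t + 1)) p = 0 :=
  chernCochain_cocycle_general S hcen d hd_add hd_mul g hcoc p i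
end

section
/- Let Ω be a ring, R a commutative subring contained in the center of Ω, and d : R → Ω additive with d(a·b) = d(a)·b + a·d(b). Let f, g, h be invertible n×n matrices over R, and D the entrywise application of d. Then trace((h·g)⁻¹·D(h)·D(g)) − trace((h·g·f)⁻¹·D(h)·D(g·f)) + trace((h·g·f)⁻¹·D(h·g)·D(f)) − trace((g·f)⁻¹·D(g)·D(f)) = 0, where all matrices are viewed over Ω. -/
/-!
Expanding `D(gf) = D(g) f + g D(f)` and `D(hg) = D(h) g + h D(g)` by the Leibniz rule, the
terms `tr((hgf)⁻¹ D(h) g D(f))` of the second and third traces cancel. What remains of the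
second trace is `tr(f⁻¹ X f)` with `X = (hg)⁻¹ D(h) D(g)`, which equals `tr X` because `f` has
central entries and so may be cycled under the trace; what remains of the third is
`tr(f⁻¹ g⁻¹ h⁻¹ h D(g) D(f)) = tr((gf)⁻¹ D(g) D(f))`.
-/

namespace Matrix

variable {l m n R Ω : Type*} [Fintype m]

theorem trace_mul_comm_of_commute_s4 [Fintype n] [NonUnitalNonAssocSemiring Ω] (A : Matrix m n Ω)
    (B : Matrix n m Ω) (hAB : ∀ i j, Commute (A i j) (B j i)) :
    trace (A * B) = trace (B * A) := by
  simp only [trace, diag, mul_apply]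
  rw [Finset.sum_comm]
  exact Finset.sum_congr rfl fun i _ => Finset.sum_congr rfl fun j _ => hAB j i

theorem map_mul_of_leibniz_s4 [NonUnitalNonAssocSemiring R] [NonUnitalNonAssocSemiring Ω]
    (ι : R → Ω) (d : R →+ Ω) (hd : ∀ a b, d (a * b) = d a * ι b + ι a * d b)
    (A : Matrix l m R) (B : Matrix m n R) :
    (A * B).map d = A.map d * B.map ι + A.map ι * B.map d := by
  ext i j
  simp only [map_apply, mul_apply, add_apply, map_sum, hd, Finset.sum_add_distrib]

theorem trace_map_mul_mul_map_of_mul_eq_one [DecidableEq m] [Semiring R] [Semiring Ω]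
    (ι : R →+* Ω) (hι : ∀ r x, Commute (ι r) x) {P P' : Matrix m m R} (hP : P * P' = 1)
    (X : Matrix m m Ω) :
    trace (P'.map ι * X * P.map ι) = trace X := by
  rw [trace_mul_comm_of_commute_s4 (P'.map ι * X) (P.map ι) fun i j => (hι _ _).symm,
    ← Matrix.mul_assoc, ← Matrix.map_mul, hP, Matrix.map_one _ ι.map_zero ι.map_one,
    Matrix.one_mul]

end Matrix

open Matrix

theorem chern_two_cocycle_general {Ω : Type*} [Ring Ω] (S : Subring Ω)
    (hcen : ∀ (s : S) (x : Ω), (s : Ω) * x = x * (s : Ω))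
    (d : S → Ω)
    (hd_add : ∀ a b : S, d (a + b) = d a + d b)
    (hd_mul : ∀ a b : S, d (a * b) = d a * (b : Ω) + (a : Ω) * d b)
    {n : ℕ} (f g h finv ginv hinv : Matrix (Fin n) (Fin n) S)
    (hf : f * finv = 1)
    (hh' : hinv * h = 1) :
    Matrix.trace (((ginv * hinv).map (fun x => (x : Ω))) * (h.map d) * (g.map d))
      - Matrix.trace (((finv * ginv * hinv).map (fun x => (x : Ω))) * (h.map d) * ((g * f).map d))
      + Matrix.trace (((finv * ginv * hinv).map (fun x => (x : Ω))) * ((h * g).map d) * (f.map d))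
      - Matrix.trace (((finv * ginv).map (fun x => (x : Ω))) * (g.map d) * (f.map d)) = 0 := by
  have hD (A B : Matrix (Fin n) (Fin n) S) : (A * B).map d = A.map d * B.map S.subtype
      + A.map S.subtype * B.map d :=
    map_mul_of_leibniz_s4 S.subtype (AddMonoidHom.mk' d hd_add) hd_mul A B
  have hconj (X : Matrix (Fin n) (Fin n) Ω) :
      trace (finv.map S.subtype * X * f.map S.subtype) = trace X :=
    trace_map_mul_mul_map_of_mul_eq_one S.subtype hcen hf X
  have hcancel : hinv.map S.subtype * h.map S.subtype = 1 := by
    rw [← Matrix.map_mul, hh', Matrix.map_one _ S.subtype.map_zero S.subtype.map_one]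
  simp only [show (fun x : S => (x : Ω)) = S.subtype from rfl, Matrix.map_mul, hD,
    Matrix.mul_add, Matrix.add_mul, trace_add]
  rw [← hconj (ginv.map S.subtype * hinv.map S.subtype * h.map d * g.map d)]
  simp only [Matrix.mul_assoc]
  rw [← Matrix.mul_assoc (hinv.map S.subtype) (h.map S.subtype), hcancel, Matrix.one_mul]
  abel

/-- The `p = 2` component of the Čech coboundary vanishing for the Chern character
cochains: for invertible matrices `f, g, h` over a central commutative subring `S`
of `Ω` and a Leibniz map `d : S → Ω` (applied entrywise as `D`),
`tr((hg)⁻¹ D(h) D(g)) − tr((hgf)⁻¹ D(h) D(gf)) + tr((hgf)⁻¹ D(hg) D(f)) − tr((gf)⁻¹ D(g) D(f)) = 0`. -/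
theorem chern_two_cocycle {Ω : Type*} [Ring Ω] (S : Subring Ω)
    (hcen : ∀ (s : S) (x : Ω), (s : Ω) * x = x * (s : Ω))
    (d : S → Ω)
    (hd_add : ∀ a b : S, d (a + b) = d a + d b)
    (hd_mul : ∀ a b : S, d (a * b) = d a * (b : Ω) + (a : Ω) * d b)
    {n : ℕ} (f g h finv ginv hinv : Matrix (Fin n) (Fin n) S)
    (hf : f * finv = 1) (hf' : finv * f = 1)
    (hg : g * ginv = 1) (hg' : ginv * g = 1)
    (hh : h * hinv = 1) (hh' : hinv * h = 1) :
    Matrix.trace (((ginv * hinv).map (fun x => (x : Ω))) * (h.map d) * (g.map d))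
      - Matrix.trace (((finv * ginv * hinv).map (fun x => (x : Ω))) * (h.map d) * ((g * f).map d))
      + Matrix.trace (((finv * ginv * hinv).map (fun x => (x : Ω))) * ((h * g).map d) * (f.map d))
      - Matrix.trace (((finv * ginv).map (fun x => (x : Ω))) * (g.map d) * (f.map d)) = 0 :=
  chern_two_cocycle_general S hcen d hd_add hd_mul f g h finv ginv hinv hf hh'
end

section
/- Let X be a set, I a type, and U : I → Set X a cover of X (⋃_i U i = X). Let Č(U) be the Čech nerve simplicial set, whose q-simplices are pairs (i, x) with i : Fin(q+1) → I and x ∈ ⋂_t U(i t), with faces/degeneracies deleting/repeating indices. Let G be a group and BG the classifying simplicial set with BG_q = G^q, faces d_j multiplying adjacent entries (d₀ and d_q dropping the first/last entry) and degeneracies inserting the unit. Then simplicial set maps Č(U) → BG are in natural bijection with families of functions g_{i,j} : U i ∩ U j → G (for i, j ∈ I) satisfying g_{i,j}(x) · g_{j,k}(x) = g_{i,k}(x) for all x ∈ U i ∩ U j ∩ U k, and g_{i,i}(x) = 1 for all x ∈ U i. -/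
/-!
Over a point `x`, the simplices of the Čech nerve are just the tuples of indices `i` with
`x ∈ U i`, so the Čech nerve is the disjoint union over `x` of the nerves of the codiscrete
categories on `{i | x ∈ U i}`. Since the nerve functor is fully faithful, a map to
`BG = nerve (SingleObj G)` is therefore a family, indexed by `x`, of functors from these
codiscrete categories to `SingleObj G`, and such a functor is exactly a normalized cocycle.
-/

open CategoryTheory

/-- The Čech nerve of a cover `U : I → Set X`: its `q`-simplices are pairs of an index
tuple `i : Fin (q+1) → I` together with a point `x` lying in all the `U (i t)`;
simplicial structure maps act by reindexing. -/
def cechNerveSSet {X I : Type} (U : I → Set X) : SSet where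
  obj Δ := { p : (Fin (Δ.unop.len + 1) → I) × X // ∀ t, p.2 ∈ U (p.1 t) }
  map f := TypeCat.ofHom fun p => ⟨(p.1.1 ∘ f.unop.toOrderHom, p.1.2), fun t => p.2 (f.unop.toOrderHom t)⟩

namespace cechNerveSSet

variable {X I : Type} (U : I → Set X)

def fiberInclusion (x : X) : nerve (Codiscrete {i // x ∈ U i}) ⟶ cechNerveSSet U where
  app _ := TypeCat.ofHom fun p => ⟨(fun t => (p.obj t).as.1, x), fun t => (p.obj t).as.2⟩

def homEquivPi (K : SSet) :
    (cechNerveSSet U ⟶ K) ≃ ∀ x, (nerve (Codiscrete {i // x ∈ U i}) ⟶ K) where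
  toFun F x := fiberInclusion U x ≫ F
  invFun φ :=
    { app Δ := TypeCat.ofHom fun p =>
        (φ p.1.2).app Δ (Codiscrete.equivFun.symm fun t => ⟨p.1.1 t, p.2 t⟩)
      naturality Δ Δ' f := by
        ext p
        exact (φ p.1.2).naturality_apply f (Codiscrete.equivFun.symm fun t => ⟨p.1.1 t, p.2 t⟩) }
  left_inv _ := rfl
  right_inv φ := by
    funext x
    ext Δ q
    exact congrArg ((φ x).app Δ) (nerve.ext_of_isThin rfl)

end cechNerveSSet

namespace CategoryTheory.Codiscrete

/-- Composition in `SingleObj M` is multiplication in the reverse order, so the cocycle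
reads the arrow `b ⟶ a` as `g a b`. -/
def functorToSingleObjEquiv (S M : Type*) [Monoid M] :
    (Codiscrete S ⥤ SingleObj M) ≃
      { g : S → S → M // (∀ a b c, g a b * g b c = g a c) ∧ ∀ a, g a a = 1 } where
  toFun F := ⟨fun a b => F.map (X := ⟨b⟩) (Y := ⟨a⟩) (),
    fun a b c => by rw [← SingleObj.comp_as_mul, ← F.map_comp]; rfl,
    fun a => F.map_id ⟨a⟩⟩
  invFun g :=
    { obj _ := SingleObj.star M
      map {x y} _ := g.1 y.as x.as
      map_id x := g.2.2 x.as
      map_comp {x y z} _ _ := by rw [SingleObj.comp_as_mul]; exact (g.2.1 z.as y.as x.as).symm }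
  left_inv F := Functor.ext (fun _ => rfl) fun _ _ _ => by
    simp only [eqToHom_refl, Category.comp_id, Category.id_comp]; rfl
  right_inv _ := rfl

end CategoryTheory.Codiscrete

def pointwiseCocycleEquiv {X I : Type*} (U : I → Set X) (M : Type*) [Monoid M] :
    (∀ x : X, { g : {i // x ∈ U i} → {i // x ∈ U i} → M //
        (∀ a b c, g a b * g b c = g a c) ∧ ∀ a, g a a = 1 }) ≃
      { g : ∀ i j : I, ↥(U i ∩ U j) → M //
        (∀ (i j k : I) (x : X) (hi : x ∈ U i) (hj : x ∈ U j) (hk : x ∈ U k),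
          g i j ⟨x, ⟨hi, hj⟩⟩ * g j k ⟨x, ⟨hj, hk⟩⟩ = g i k ⟨x, ⟨hi, hk⟩⟩) ∧
        (∀ (i : I) (x : X) (hi : x ∈ U i), g i i ⟨x, ⟨hi, hi⟩⟩ = 1) } where
  toFun φ := ⟨fun i j x => (φ x.1).1 ⟨i, x.2.1⟩ ⟨j, x.2.2⟩,
    fun i j k x hi hj hk => (φ x).2.1 ⟨i, hi⟩ ⟨j, hj⟩ ⟨k, hk⟩,
    fun i x hi => (φ x).2.2 ⟨i, hi⟩⟩
  invFun g x := ⟨fun a b => g.1 a.1 b.1 ⟨x, a.2, b.2⟩,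
    fun a b c => g.2.1 a.1 b.1 c.1 x a.2 b.2 c.2,
    fun a => g.2.2 a.1 x a.2⟩
  left_inv _ := rfl
  right_inv _ := rfl

theorem cechNerve_maps_to_BG_general {X I G : Type} [Group G] (U : I → Set X) :
    Nonempty ((cechNerveSSet U ⟶ nerve (SingleObj G)) ≃
      { g : ∀ i j : I, ↥(U i ∩ U j) → G //
        (∀ (i j k : I) (x : X) (hi : x ∈ U i) (hj : x ∈ U j) (hk : x ∈ U k),
          g i j ⟨x, ⟨hi, hj⟩⟩ * g j k ⟨x, ⟨hj, hk⟩⟩ = g i k ⟨x, ⟨hi, hk⟩⟩) ∧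
        (∀ (i : I) (x : X) (hi : x ∈ U i), g i i ⟨x, ⟨hi, hi⟩⟩ = 1) }) :=
  ⟨(cechNerveSSet.homEquivPi U _).trans <|
    (Equiv.piCongrRight fun _ =>
      (nerveFunctor.fullyfaithful.homEquiv.symm.trans (Functor.equivCatHom _ _).symm).trans
        (Codiscrete.functorToSingleObjEquiv _ G)).trans
    (pointwiseCocycleEquiv U G)⟩

/-- Lemma 4.14 of the paper (case `n = 0`): simplicial set maps from the Čech nerve of
a cover `U` of `X` to `BG` (the nerve of the one-object groupoid on the group `G`) are
in bijection with families `gₘ : U i ∩ U j → G` satisfying the cocycle condition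
`g_{ij}(x)·g_{jk}(x) = g_{ik}(x)` and `g_{ii}(x) = 1`. -/
theorem cechNerve_maps_to_BG {X I G : Type} [Group G] (U : I → Set X)
    (hcover : (⋃ i, U i) = Set.univ) :
    Nonempty ((cechNerveSSet U ⟶ nerve (SingleObj G)) ≃
      { g : ∀ i j : I, ↥(U i ∩ U j) → G //
        (∀ (i j k : I) (x : X) (hi : x ∈ U i) (hj : x ∈ U j) (hk : x ∈ U k),
          g i j ⟨x, ⟨hi, hj⟩⟩ * g j k ⟨x, ⟨hj, hk⟩⟩ = g i k ⟨x, ⟨hi, hk⟩⟩) ∧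
        (∀ (i : I) (x : X) (hi : x ∈ U i), g i i ⟨x, ⟨hi, hi⟩⟩ = 1) }) :=
  cechNerve_maps_to_BG_general U
end
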